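/- Let (Ω, μ) be a probability space, let Bool carry the ⊤ σ-algebra, let α ∈ [0,1] be real, and let B : ℕ → Ω → Bool be a sequence of random variables that are independent in the sense of Mathlib's ProbabilityTheory.iIndepFun with μ {ω | B k ω = true} = ENNReal.ofReal α for every k. Define the acceptance event A u := {ω | ∃ j ≤ u, B j ω = true}. Then for all natural numbers u ≤ v: μ (A u \ A v) = 0 and μ (A v \ A u) ≤ ENNReal.ofReal (α·(v − u)). -/

import Mathlib

/-! `A u` is the partial union `Set.accumulate` of the coin events `{B j = true}` up to `u`, hence
increasing in `u`; and `A v \ A u` is covered by the coin events with `u < j ≤ v`, so the union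
bound gives `α (v - u)`. -/

open MeasureTheory ProbabilityTheory

namespace Set

theorem accumulate_diff_accumulate_subset {α : Type*} (s : ℕ → Set α) (u v : ℕ) :
    accumulate s v \ accumulate s u ⊆ ⋃ j ∈ Finset.Ioc u v, s j := by
  rintro x ⟨hv, hu⟩
  obtain ⟨j, hjv, hj⟩ := mem_accumulate.mp hv
  have hju : u < j := not_le.mp fun hju => hu (mem_accumulate.mpr ⟨j, hju, hj⟩)
  exact mem_biUnion (Finset.mem_Ioc.mpr ⟨hju, hjv⟩) hj

end Set

theorem MeasureTheory.measure_accumulate_diff_le {Ω : Type*} [MeasurableSpace Ω]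
    (μ : Measure Ω) {s : ℕ → Set Ω} {c : ENNReal} (hs : ∀ j, μ (s j) ≤ c) (u v : ℕ) :
    μ (Set.accumulate s v \ Set.accumulate s u) ≤ (v - u : ℕ) * c :=
  calc μ (Set.accumulate s v \ Set.accumulate s u)
      ≤ μ (⋃ j ∈ Finset.Ioc u v, s j) := measure_mono (Set.accumulate_diff_accumulate_subset s u v)
    _ ≤ ∑ j ∈ Finset.Ioc u v, μ (s j) := measure_biUnion_finset_le _ _
    _ ≤ ∑ _j ∈ Finset.Ioc u v, c := Finset.sum_le_sum fun j _ => hs j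
    _ = (v - u : ℕ) * c := by rw [Finset.sum_const, Nat.card_Ioc, nsmul_eq_mul]

theorem increasing_grace_period_fair_general {Ω : Type*} [MeasurableSpace Ω]
    (μ : Measure Ω)
    (α : ℝ)
    (B : ℕ → Ω → Bool)
    (hB : ∀ k, μ {ω | B k ω = true} = ENNReal.ofReal α)
    (A : ℕ → Set Ω) (hA : ∀ u, A u = {ω | ∃ j ≤ u, B j ω = true}) :
    ∀ u v : ℕ, u ≤ v →
      μ (A u \ A v) = 0 ∧
      μ (A v \ A u) ≤ ENNReal.ofReal (α * ((v : ℝ) - (u : ℝ))) := by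
  intro u v huv
  obtain rfl : A = Set.accumulate fun j => {ω | B j ω = true} :=
    funext fun u => by ext; simp [hA, Set.mem_accumulate]
  refine ⟨by rw [Set.sdiff_eq_empty.mpr (Set.monotone_accumulate huv), measure_empty], ?_⟩
  calc μ (Set.accumulate _ v \ Set.accumulate _ u)
      ≤ (v - u : ℕ) * ENNReal.ofReal α := measure_accumulate_diff_le μ (fun j => (hB j).le) u v
    _ = ENNReal.ofReal (α * ((v : ℝ) - (u : ℝ))) := by
      rw [← Nat.cast_sub huv, ENNReal.ofReal_mul' (Nat.cast_nonneg _), ENNReal.ofReal_natCast,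
        mul_comm]

/-- Fairness of the increasing grace period (used in Theorem 2): with
`A u` the event that customer `u` is accepted (some Bernoulli(α) coin
flip up to `u` is true), an earlier customer is never accepted when a
later one is rejected, and
`μ (A v \ A u) ≤ ENNReal.ofReal (α·(v − u))` for `u ≤ v`. -/
theorem increasing_grace_period_fair {Ω : Type*} [MeasurableSpace Ω]
    (μ : Measure Ω) [IsProbabilityMeasure μ]
    (α : ℝ) (hα0 : 0 ≤ α) (hα1 : α ≤ 1)
    (B : ℕ → Ω → Bool)
    (hindep : iIndepFun (m := fun _ => (⊤ : MeasurableSpace Bool)) B μ)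
    (hB : ∀ k, μ {ω | B k ω = true} = ENNReal.ofReal α)
    (A : ℕ → Set Ω) (hA : ∀ u, A u = {ω | ∃ j ≤ u, B j ω = true}) :
    ∀ u v : ℕ, u ≤ v →
      μ (A u \ A v) = 0 ∧
      μ (A v \ A u) ≤ ENNReal.ofReal (α * ((v : ℝ) - (u : ℝ))) :=
  increasing_grace_period_fair_general μ α B hB A hA
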